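/- arXiv:1403.0789 — 2 statements merged into one kernel-verified Lean document; each statement's English description precedes it below -/
import Mathlib

section
/- Let G be a simple graph with an interval representation, let {s_1,t_1},...,{s_k,t_k} be pairwise distinct (as unordered pairs) terminal pairs of distinct vertices with requirements r_1,...,r_k, and let P_1,...,P_l be a solution. Then for all indices i != j, there are no solution paths P_a, P_b joining s_i and t_i and a solution path P_c joining s_j and t_j, each with at least one inner vertex, such that the covered interval I_{P_c} lies between the covered intervals I_{P_a} and I_{P_b}. -/
/-!
Let `y` be a point of an inner interval of `P_c`. A terminal `x` of pair `i` is adjacent to inner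
vertices of both `P_a` and `P_b`, so its interval meets `I_{P_a}` to the left of `y` and `I_{P_b}`
to the right of `y`; being an interval, it contains `y`. Hence `x` is equal or adjacent to an inner
vertex of `P_c`, which mutual inducedness allows only if `x` is an end of `P_c`. Both terminals of
pair `i` are then ends of `P_c`, i.e. the pairs `i` and `j` coincide.
-/

open SimpleGraph

variable {V : Type*}

/-- An interval representation of a simple graph: each vertex gets a closed real
interval `[l u, r u]` with `l u < r u`, and two distinct vertices are adjacent
iff their intervals intersect. -/
structure IntervalRep (G : SimpleGraph V) where
  l : V → ℝ
  r : V → ℝ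
  lt : ∀ u, l u < r u
  adj_iff : ∀ u v, u ≠ v →
    (G.Adj u v ↔ (Set.Icc (l u) (r u) ∩ Set.Icc (l v) (r v)).Nonempty)

/-- A path in `G` together with its two end-vertices. -/
structure IndexedPath (G : SimpleGraph V) where
  a : V
  b : V
  walk : G.Walk a b
  isPath : walk.IsPath

namespace IndexedPath

variable {G : SimpleGraph V}

/-- The set of end-vertices of the path. -/
def ends (P : IndexedPath G) : Set V := {P.a, P.b}

/-- `v` is an inner vertex of `P`, i.e. a vertex of `P` other than its ends. -/
def IsInner (P : IndexedPath G) (v : V) : Prop :=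
  v ∈ P.walk.support.tail.dropLast

/-- `P` has no inner chords: any edge between two of its vertices is either an
edge of the path itself or the edge between its two end-vertices. -/
def NoInnerChords (P : IndexedPath G) : Prop :=
  ∀ x y, x ∈ P.walk.support → y ∈ P.walk.support → G.Adj x y →
    s(x, y) ∈ P.walk.edges ∨ s(x, y) = s(P.a, P.b)

/-- `P` joins the vertices `x` and `y`. -/
def Joins (P : IndexedPath G) (x y : V) : Prop :=
  (P.a = x ∧ P.b = y) ∨ (P.a = y ∧ P.b = x)

end IndexedPath

/-- A family of pairwise distinct paths is mutually induced if: (i) each path has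
no inner chords; (ii) two distinct paths share only vertices that are ends of both;
(iii) no inner vertex of one path is adjacent to a vertex `v` of another path,
except when `v` is an end-vertex of both paths. -/
def MutuallyInduced {G : SimpleGraph V} {ι : Type*} (P : ι → IndexedPath G) : Prop :=
  (∀ i j, i ≠ j → P i ≠ P j) ∧
  (∀ i, (P i).NoInnerChords) ∧
  (∀ i j, i ≠ j → ∀ v, v ∈ (P i).walk.support → v ∈ (P j).walk.support →
      v ∈ (P i).ends ∧ v ∈ (P j).ends) ∧
  (∀ i j, i ≠ j → ∀ u v, (P i).IsInner u → v ∈ (P j).walk.support → G.Adj u v →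
      v ∈ (P i).ends ∧ v ∈ (P j).ends)

/-- The covered interval of a path: the union of the intervals of its inner vertices. -/
def coveredInterval {G : SimpleGraph V} (ρ : IntervalRep G) (P : IndexedPath G) : Set ℝ :=
  ⋃ v ∈ {w : V | P.IsInner w}, Set.Icc (ρ.l v) (ρ.r v)

/-- A solution to Requirement Induced Disjoint Paths: `l = r 1 + ... + r k`
mutually induced paths, exactly `r i` of which join `s i` and `t i`. -/
def RIDPSolution {G : SimpleGraph V} (k : ℕ) (s t : Fin k → V) (r : Fin k → ℕ)
    {l : ℕ} (P : Fin l → IndexedPath G) : Prop :=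
  l = ∑ i, r i ∧ MutuallyInduced P ∧
    ∀ i, Nat.card {j : Fin l // (P j).Joins (s i) (t i)} = r i

/-- `A` lies between `B` and `C`: every point of `B` is strictly smaller than every
point of `A`, and every point of `A` is strictly smaller than every point of `C`. -/
def LiesBetween (A B C : Set ℝ) : Prop :=
  (∀ x ∈ B, ∀ y ∈ A, x < y) ∧ (∀ y ∈ A, ∀ z ∈ C, y < z)

variable {G : SimpleGraph V}

lemma SimpleGraph.Walk.exists_adj_start_of_mem_support_tail_dropLast {u w v : V}
    (p : G.Walk u w) (hv : v ∈ p.support.tail.dropLast) :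
    ∃ v' ∈ p.support.tail.dropLast, G.Adj u v' := by
  cases p with
  | nil => simp at hv
  | cons h q =>
    cases q with
    | nil => simp at hv
    | cons _ q' =>
      refine ⟨_, ?_, h⟩
      simp [List.dropLast_cons_of_ne_nil q'.support_ne_nil]

namespace IndexedPath

def reverse (P : IndexedPath G) : IndexedPath G :=
  ⟨P.b, P.a, P.walk.reverse, P.isPath.reverse⟩

@[simp]
lemma isInner_reverse {P : IndexedPath G} {v : V} : P.reverse.IsInner v ↔ P.IsInner v := by
  change v ∈ P.walk.reverse.support.tail.dropLast ↔ v ∈ P.walk.support.tail.dropLast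
  simp [List.tail_dropLast]

lemma IsInner.mem_support {P : IndexedPath G} {v : V} (hv : P.IsInner v) :
    v ∈ P.walk.support :=
  List.tail_subset _ (List.dropLast_subset _ hv)

lemma mem_ends_iff {P : IndexedPath G} {x : V} : x ∈ P.ends ↔ x ∈ s(P.a, P.b) := by
  simp [ends, Sym2.mem_iff]

lemma mem_support_of_mem_ends {P : IndexedPath G} {x : V} (hx : x ∈ P.ends) :
    x ∈ P.walk.support := by
  rcases hx with rfl | rfl
  · exact P.walk.start_mem_support
  · exact P.walk.end_mem_support

lemma joins_iff {P : IndexedPath G} {x y : V} : P.Joins x y ↔ s(P.a, P.b) = s(x, y) :=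
  Sym2.eq_iff.symm

lemma exists_isInner_adj_start {P : IndexedPath G} (h : ∃ v, P.IsInner v) :
    ∃ v, P.IsInner v ∧ G.Adj P.a v :=
  have ⟨_, hv⟩ := h
  P.walk.exists_adj_start_of_mem_support_tail_dropLast hv

lemma exists_isInner_adj_of_mem_ends {P : IndexedPath G} (h : ∃ v, P.IsInner v) {x : V}
    (hx : x ∈ P.ends) : ∃ v, P.IsInner v ∧ G.Adj x v := by
  rcases hx with rfl | rfl
  · exact exists_isInner_adj_start h
  · obtain ⟨v, hv, hadj⟩ := exists_isInner_adj_start (P := P.reverse) (by simpa using h)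
    exact ⟨v, isInner_reverse.1 hv, hadj⟩

end IndexedPath

namespace IntervalRep

lemma eq_or_adj_of_mem_Icc (ρ : IntervalRep G) {u v : V} {y : ℝ}
    (hu : y ∈ Set.Icc (ρ.l u) (ρ.r u)) (hv : y ∈ Set.Icc (ρ.l v) (ρ.r v)) :
    u = v ∨ G.Adj u v := by
  by_cases huv : u = v
  · exact .inl huv
  · exact .inr ((ρ.adj_iff u v huv).2 ⟨y, hu, hv⟩)

lemma left_mem_coveredInterval (ρ : IntervalRep G) {P : IndexedPath G} {v : V}
    (hv : P.IsInner v) : ρ.l v ∈ coveredInterval ρ P :=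
  Set.mem_biUnion (x := v) hv (Set.left_mem_Icc.2 (ρ.lt v).le)

lemma exists_mem_Icc_inter_coveredInterval (ρ : IntervalRep G) {P : IndexedPath G}
    (h : ∃ v, P.IsInner v) {x : V} (hx : x ∈ P.ends) :
    ∃ p ∈ Set.Icc (ρ.l x) (ρ.r x), p ∈ coveredInterval ρ P := by
  obtain ⟨v, hv, hxv⟩ := P.exists_isInner_adj_of_mem_ends h hx
  obtain ⟨p, hpx, hpv⟩ := (ρ.adj_iff x v hxv.ne).1 hxv
  exact ⟨p, hpx, Set.mem_biUnion (x := v) hv hpv⟩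

end IntervalRep

lemma MutuallyInduced.mem_ends_of_liesBetween {ι : Type*} {P : ι → IndexedPath G}
    (hP : MutuallyInduced P) (ρ : IntervalRep G) {a b c : ι} (hac : a ≠ c)
    (ha : ∃ v, (P a).IsInner v) (hb : ∃ v, (P b).IsInner v) (hc : ∃ v, (P c).IsInner v)
    (hbet : LiesBetween (coveredInterval ρ (P c)) (coveredInterval ρ (P a))
      (coveredInterval ρ (P b)))
    {x : V} (hxa : x ∈ (P a).ends) (hxb : x ∈ (P b).ends) : x ∈ (P c).ends := by
  obtain ⟨-, -, hshare, hinduced⟩ := hP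
  obtain ⟨v, hv⟩ := hc
  have hy := ρ.left_mem_coveredInterval hv
  obtain ⟨p, hpx, hpa⟩ := ρ.exists_mem_Icc_inter_coveredInterval ha hxa
  obtain ⟨q, hqx, hqb⟩ := ρ.exists_mem_Icc_inter_coveredInterval hb hxb
  have hyx : ρ.l v ∈ Set.Icc (ρ.l x) (ρ.r x) :=
    ⟨hpx.1.trans (hbet.1 p hpa _ hy).le, (hbet.2 _ hy q hqb).le.trans hqx.2⟩
  have hxa' := IndexedPath.mem_support_of_mem_ends hxa
  rcases ρ.eq_or_adj_of_mem_Icc (Set.left_mem_Icc.2 (ρ.lt v).le) hyx with rfl | hvx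
  · exact (hshare a c hac _ hxa' hv.mem_support).2
  · exact (hinduced c a hac.symm v x hv hxa' hvx).1

theorem statement4_general {V : Type*} (G : SimpleGraph V) (ρ : IntervalRep G)
    (k : ℕ) (s t : Fin k → V) (r : Fin k → ℕ)
    (hst : ∀ i, s i ≠ t i)
    (hpairs : ∀ i j, i ≠ j → s(s i, t i) ≠ s(s j, t j))
    (l : ℕ) (P : Fin l → IndexedPath G)
    (hsol : RIDPSolution k s t r P)
    (i j : Fin k) (hij : i ≠ j) :
    ¬ ∃ a b c : Fin l, a ≠ b ∧
        (P a).Joins (s i) (t i) ∧ (P b).Joins (s i) (t i) ∧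
        (P c).Joins (s j) (t j) ∧
        (∃ v, (P a).IsInner v) ∧ (∃ v, (P b).IsInner v) ∧ (∃ v, (P c).IsInner v) ∧
        LiesBetween (coveredInterval ρ (P c))
          (coveredInterval ρ (P a)) (coveredInterval ρ (P b)) := by
  rintro ⟨a, b, c, -, hja, hjb, hjc, ha, hb, hc, hbet⟩
  obtain ⟨-, hinduced, -⟩ := hsol
  rw [IndexedPath.joins_iff] at hja hjb hjc
  have hac : a ≠ c := by
    rintro rfl
    exact hpairs i j hij (hja.symm.trans hjc)
  have hends : ∀ x ∈ s(s i, t i), x ∈ (P c).ends := fun x hx =>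
    hinduced.mem_ends_of_liesBetween ρ hac ha hb hc hbet
      (by rwa [IndexedPath.mem_ends_iff, hja]) (by rwa [IndexedPath.mem_ends_iff, hjb])
  simp only [IndexedPath.mem_ends_iff, hjc] at hends
  exact hpairs i j hij ((Sym2.mem_and_mem_iff (hst i)).1
    ⟨hends _ (Sym2.mem_mk_left _ _), hends _ (Sym2.mem_mk_right _ _)⟩).symm

/-- in a solution, no covered interval of a solution path for one
terminal pair lies between the covered intervals of two solution paths for a
different terminal pair. -/
theorem statement4 {V : Type*} (G : SimpleGraph V) (ρ : IntervalRep G)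
    (k : ℕ) (s t : Fin k → V) (r : Fin k → ℕ)
    (hst : ∀ i, s i ≠ t i)
    (hpairs : ∀ i j, i ≠ j → s(s i, t i) ≠ s(s j, t j))
    (hr : ∀ i, 0 < r i)
    (l : ℕ) (P : Fin l → IndexedPath G)
    (hsol : RIDPSolution k s t r P)
    (i j : Fin k) (hij : i ≠ j) :
    ¬ ∃ a b c : Fin l, a ≠ b ∧
        (P a).Joins (s i) (t i) ∧ (P b).Joins (s i) (t i) ∧
        (P c).Joins (s j) (t j) ∧
        (∃ v, (P a).IsInner v) ∧ (∃ v, (P b).IsInner v) ∧ (∃ v, (P c).IsInner v) ∧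
        LiesBetween (coveredInterval ρ (P c))
          (coveredInterval ρ (P a)) (coveredInterval ρ (P b)) :=
  statement4_general G ρ k s t r hst hpairs l P hsol i j hij
end

section
/- Let G be a simple graph with an interval representation, and let P_1, P_2,..., P_l be mutually induced paths, where P_1 joins vertices a and b and has at least one inner vertex. Let P_1' be another path in G joining a and b, with no inner chords and at least one inner vertex, such that the covered interval of P_1' is contained in the covered interval of P_1 (I_{P_1'} ⊆ I_{P_1}). Then P_1', P_2,..., P_l are mutually induced. (Consequently, in any solution containing the path P_1, the path P_1 can be replaced by P_1'.) -/
open SimpleGraph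

variable {V : Type*}

/-!
In an interval model, two vertices are equal or adjacent exactly when their intervals meet.
So anything equal or adjacent to an inner vertex of `P'` meets `I_{P'} ⊆ I_{P₁}`, hence is equal
or adjacent to an inner vertex of `P₁`; the conditions that `P₁` satisfies against the other
paths therefore transfer to `P'`.
-/

namespace SimpleGraph.Walk

variable {G : SimpleGraph V} {u v x : V}

theorem mem_support_iff_mem_tail_dropLast_or (p : G.Walk u v) :
    x ∈ p.support ↔ x = u ∨ x = v ∨ x ∈ p.support.tail.dropLast := by
  cases p with
  | nil => simp
  | cons h q =>
    rw [support_cons, List.tail_cons, ← dropLast_support_concat q]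
    simp only [List.mem_cons, List.mem_append, List.dropLast_concat]
    tauto

theorem IsPath.ne_of_mem_tail_dropLast {p : G.Walk u v} (hp : p.IsPath)
    (hx : x ∈ p.support.tail.dropLast) : x ≠ u ∧ x ≠ v := by
  cases p with
  | nil => simp at hx
  | cons h q =>
    have hnd := hp.support_nodup
    rw [support_cons, ← dropLast_support_concat q] at hnd
    rw [support_cons, List.tail_cons] at hx
    simp only [List.nodup_cons, List.nodup_append, List.mem_append, List.mem_singleton] at hnd
    grind

end SimpleGraph.Walk

namespace IndexedPath

variable {G : SimpleGraph V} {P Q R : IndexedPath G} {u v : V}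

theorem mem_support_iff_mem_ends_or_isInner :
    v ∈ P.walk.support ↔ v ∈ P.ends ∨ P.IsInner v := by
  rw [P.walk.mem_support_iff_mem_tail_dropLast_or, IsInner, ends, Set.mem_insert_iff,
    Set.mem_singleton_iff, or_assoc]

theorem IsInner.mem_support_s10 (h : P.IsInner v) : v ∈ P.walk.support :=
  mem_support_iff_mem_ends_or_isInner.2 (Or.inr h)

theorem mem_support_of_mem_ends_s10 (h : v ∈ P.ends) : v ∈ P.walk.support :=
  mem_support_iff_mem_ends_or_isInner.2 (Or.inl h)

theorem IsInner.notMem_ends (h : P.IsInner v) : v ∉ P.ends := by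
  obtain ⟨hva, hvb⟩ := P.isPath.ne_of_mem_tail_dropLast h
  simp [ends, hva, hvb]

theorem Joins.ends_eq {x y : V} (h : P.Joins x y) : P.ends = {x, y} := by
  rcases h with ⟨rfl, rfl⟩ | ⟨rfl, rfl⟩
  · rfl
  · exact Set.pair_comm _ _

/-- Distinctness and conditions (ii), (iii) of mutual inducedness, for the ordered pair `(P, Q)`. -/
def InducedWith (P Q : IndexedPath G) : Prop :=
  P ≠ Q ∧
  (∀ v, v ∈ P.walk.support → v ∈ Q.walk.support → v ∈ P.ends ∧ v ∈ Q.ends) ∧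
  (∀ u v, P.IsInner u → v ∈ Q.walk.support → G.Adj u v → v ∈ P.ends ∧ v ∈ Q.ends)

theorem InducedWith.mem_ends_of_eq_or_adj (hPQ : P.InducedWith Q) (hu : P.IsInner u)
    (hv : v ∈ Q.walk.support) (huv : u = v ∨ G.Adj u v) : v ∈ P.ends ∧ v ∈ Q.ends := by
  rcases huv with rfl | huv
  · exact hPQ.2.1 u hu.mem_support_s10 hv
  · exact hPQ.2.2 u v hu hv huv

end IndexedPath

open IndexedPath

theorem mutuallyInduced_iff {G : SimpleGraph V} {ι : Type*} {P : ι → IndexedPath G} :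
    MutuallyInduced P ↔
      (∀ i, (P i).NoInnerChords) ∧ ∀ i j, i ≠ j → (P i).InducedWith (P j) :=
  ⟨fun ⟨hne, hnc, hsh, hadj⟩ ↦ ⟨hnc, fun i j hij ↦ ⟨hne i j hij, hsh i j hij, hadj i j hij⟩⟩,
   fun ⟨hnc, h⟩ ↦ ⟨fun i j hij ↦ (h i j hij).1, hnc, fun i j hij ↦ (h i j hij).2.1,
     fun i j hij ↦ (h i j hij).2.2⟩⟩

theorem MutuallyInduced.update {G : SimpleGraph V} {ι : Type*} [DecidableEq ι]
    {P : ι → IndexedPath G} (hP : MutuallyInduced P) (i₀ : ι) {P' : IndexedPath G}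
    (hnc : P'.NoInnerChords) (h₁ : ∀ j, j ≠ i₀ → P'.InducedWith (P j))
    (h₂ : ∀ j, j ≠ i₀ → (P j).InducedWith P') :
    MutuallyInduced (Function.update P i₀ P') := by
  obtain ⟨hPnc, hPind⟩ := mutuallyInduced_iff.1 hP
  refine mutuallyInduced_iff.2 ⟨fun i ↦ ?_, fun i j hij ↦ ?_⟩
  · by_cases hi : i = i₀
    · simpa [hi] using hnc
    · simpa [hi] using hPnc i
  · by_cases hi : i = i₀ <;> by_cases hj : j = i₀
    · exact absurd (hi.trans hj.symm) hij
    · simpa [hi, hj] using h₁ j hj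
    · simpa [hi, hj] using h₂ i hi
    · simpa [hi, hj] using hPind i j hij

namespace IntervalRep

variable {G : SimpleGraph V} (ρ : IntervalRep G) {P Q R : IndexedPath G} {u v : V}

theorem eq_or_adj_iff :
    u = v ∨ G.Adj u v ↔ (Set.Icc (ρ.l u) (ρ.r u) ∩ Set.Icc (ρ.l v) (ρ.r v)).Nonempty := by
  by_cases huv : u = v
  · subst huv
    simpa using (ρ.lt u).le
  · simp [huv, ρ.adj_iff u v huv]

theorem mem_coveredInterval {p : ℝ} :
    p ∈ coveredInterval ρ P ↔ ∃ w, P.IsInner w ∧ p ∈ Set.Icc (ρ.l w) (ρ.r w) := by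
  simp only [coveredInterval, Set.mem_iUnion₂, exists_prop]
  rfl

theorem exists_isInner_eq_or_adj (hsub : coveredInterval ρ P ⊆ coveredInterval ρ Q)
    (hu : P.IsInner u) (huv : u = v ∨ G.Adj u v) : ∃ w, Q.IsInner w ∧ (w = v ∨ G.Adj w v) := by
  obtain ⟨p, hpu, hpv⟩ := ρ.eq_or_adj_iff.1 huv
  obtain ⟨w, hw, hpw⟩ := ρ.mem_coveredInterval.1 (hsub (ρ.mem_coveredInterval.2 ⟨u, hu, hpu⟩))
  exact ⟨w, hw, ρ.eq_or_adj_iff.2 ⟨p, hpw, hpv⟩⟩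

theorem mem_ends_of_coveredInterval_subset (hsub : coveredInterval ρ P ⊆ coveredInterval ρ Q)
    (hQR : Q.InducedWith R) (hu : P.IsInner u) (hv : v ∈ R.walk.support)
    (huv : u = v ∨ G.Adj u v) : v ∈ Q.ends ∧ v ∈ R.ends := by
  obtain ⟨w, hw, hwv⟩ := ρ.exists_isInner_eq_or_adj hsub hu huv
  exact hQR.mem_ends_of_eq_or_adj hw hv hwv

theorem inducedWith_left_of_coveredInterval_subset (hends : P.ends = Q.ends)
    (hsub : coveredInterval ρ P ⊆ coveredInterval ρ Q) (hinner : ∃ u, P.IsInner u)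
    (hQR : Q.InducedWith R) : P.InducedWith R := by
  refine ⟨?_, fun v hvP hvR ↦ ?_, fun u v hu hv huv ↦ ?_⟩
  · rintro rfl
    obtain ⟨u, hu⟩ := hinner
    exact hu.notMem_ends (ρ.mem_ends_of_coveredInterval_subset hsub hQR hu hu.mem_support_s10
      (Or.inl rfl)).2
  · rcases mem_support_iff_mem_ends_or_isInner.1 hvP with hv | hv
    · rw [hends] at hv ⊢
      exact hQR.2.1 v (mem_support_of_mem_ends_s10 hv) hvR
    · rw [hends]
      exact ρ.mem_ends_of_coveredInterval_subset hsub hQR hv hvR (Or.inl rfl)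
  · rw [hends]
    exact ρ.mem_ends_of_coveredInterval_subset hsub hQR hu hv (Or.inr huv)

theorem inducedWith_right_of_coveredInterval_subset (hends : P.ends = Q.ends)
    (hsub : coveredInterval ρ P ⊆ coveredInterval ρ Q) (hinner : ∃ u, P.IsInner u)
    (hQR : Q.InducedWith R) (hRQ : R.InducedWith Q) : R.InducedWith P := by
  have hPR := ρ.inducedWith_left_of_coveredInterval_subset hends hsub hinner hQR
  refine ⟨hPR.1.symm, fun v hvR hvP ↦ (hPR.2.1 v hvP hvR).symm, fun u v hu hv huv ↦ ?_⟩
  rcases mem_support_iff_mem_ends_or_isInner.1 hv with hvP | hvP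
  · rw [hends] at hvP ⊢
    exact hRQ.2.2 u v hu (mem_support_of_mem_ends_s10 hvP) huv
  · exact absurd (ρ.mem_ends_of_coveredInterval_subset hsub hQR hvP hu.mem_support_s10
      (Or.inr huv.symm)).2 hu.notMem_ends

end IntervalRep

theorem statement10_general {V : Type*} (G : SimpleGraph V) (ρ : IntervalRep G)
    {ι : Type*} [DecidableEq ι] (P : ι → IndexedPath G) (hMI : MutuallyInduced P)
    (i₀ : ι) (a b : V)
    (hJ : (P i₀).Joins a b)
    (P' : IndexedPath G) (hJ' : P'.Joins a b)
    (hnc' : P'.NoInnerChords) (hinner' : ∃ v, P'.IsInner v)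
    (hsub : coveredInterval ρ P' ⊆ coveredInterval ρ (P i₀)) :
    MutuallyInduced (Function.update P i₀ P') := by
  have hends : P'.ends = (P i₀).ends := by rw [hJ'.ends_eq, hJ.ends_eq]
  have hind : ∀ i j, i ≠ j → (P i).InducedWith (P j) := (mutuallyInduced_iff.1 hMI).2
  refine hMI.update i₀ hnc' (fun j hj ↦ ?_) (fun j hj ↦ ?_)
  · exact ρ.inducedWith_left_of_coveredInterval_subset hends hsub hinner' (hind i₀ j hj.symm)
  · exact ρ.inducedWith_right_of_coveredInterval_subset hends hsub hinner'
      (hind i₀ j hj.symm) (hind j i₀ hj)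

/-- if `P i₀` joins `a` and `b` and has an inner vertex, and `P'` is
another path joining `a` and `b` with no inner chords, at least one inner vertex,
and covered interval contained in that of `P i₀`, then replacing `P i₀` by `P'`
keeps the family mutually induced. -/
theorem statement10 {V : Type*} (G : SimpleGraph V) (ρ : IntervalRep G)
    {ι : Type*} [DecidableEq ι] (P : ι → IndexedPath G) (hMI : MutuallyInduced P)
    (i₀ : ι) (a b : V)
    (hJ : (P i₀).Joins a b) (hinner : ∃ v, (P i₀).IsInner v)
    (P' : IndexedPath G) (hJ' : P'.Joins a b)
    (hnc' : P'.NoInnerChords) (hinner' : ∃ v, P'.IsInner v)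
    (hsub : coveredInterval ρ P' ⊆ coveredInterval ρ (P i₀)) :
    MutuallyInduced (Function.update P i₀ P') :=
  statement10_general G ρ P hMI i₀ a b hJ P' hJ' hnc' hinner' hsub
end
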